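/- Let D be a bounded Lipschitz domain in ℝⁿ. Then there exists κ > 0 such that d_g^D(x,y) ≤ κ|x - y| for all x, y ∈ D, where d_g^D is the geodesic distance in D. -/

import Mathlib

/-!
Near a point of `closure D` a bi-Lipschitz chart from a convex set (a small ball at interior
points) joins any two nearby points `y, z` of `D` by the image of a segment, with Lipschitz
constant `≲ |y - z|`. Connectedness of `D` and compactness of its closure turn this into a
uniform bound `C` on the Lipschitz constant needed to join any two points of `D`. Finally, a
compactness argument on `closure D ×ˢ closure D` uses the local estimate near the diagonal and
the bound `C ≤ (2 C / |p - q|) |x - y|` near a pair `(p, q)` with `p ≠ q`.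
-/

open Set intervalIntegral

/-- Length of a path: `ℓ(ψ) = ∫₀¹ |ψ̇(t)| dt`. -/
noncomputable def pathLen {n : ℕ} (ψ : ℝ → EuclideanSpace ℝ (Fin n)) : ℝ :=
  ∫ t in (0 : ℝ)..1, ‖deriv ψ t‖

/-- The geodesic distance in `D`: infimum of lengths of Lipschitz paths inside `D`
joining `x` to `y`. -/
noncomputable def geodDist {n : ℕ} (D : Set (EuclideanSpace ℝ (Fin n)))
    (x y : EuclideanSpace ℝ (Fin n)) : ℝ :=
  sInf {L : ℝ | ∃ ψ : ℝ → EuclideanSpace ℝ (Fin n), (∃ K : NNReal, LipschitzWith K ψ) ∧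
    ψ 0 = x ∧ ψ 1 = y ∧ (∀ t ∈ Icc (0 : ℝ) 1, ψ t ∈ D) ∧ L = pathLen ψ}

/-- A bounded Lipschitz domain: a bounded open connected set whose boundary is
locally bi-Lipschitz equivalent to a (convex) half-cube. -/
def IsLipschitzDomain {n : ℕ} (D : Set (EuclideanSpace ℝ (Fin n))) : Prop :=
  IsOpen D ∧ IsConnected D ∧ Bornology.IsBounded D ∧
  ∀ x ∈ frontier D, ∃ U Q : Set (EuclideanSpace ℝ (Fin n)),
    ∃ φ φinv : EuclideanSpace ℝ (Fin n) → EuclideanSpace ℝ (Fin n), ∃ kp km : NNReal,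
      IsOpen U ∧ x ∈ U ∧ Convex ℝ Q ∧ LipschitzOnWith kp φ Q ∧
      LipschitzOnWith km φinv (D ∩ U) ∧ Set.BijOn φ Q (D ∩ U) ∧
      ∀ y ∈ D ∩ U, φ (φinv y) = y ∧ φinv y ∈ Q

open Filter Topology NNReal

theorem LipschitzOnWith.lipschitzWith_of_Iic_of_Ici {E : Type*} [PseudoMetricSpace E]
    {f : ℝ → E} {K : ℝ≥0} {a : ℝ} (h₁ : LipschitzOnWith K f (Iic a))
    (h₂ : LipschitzOnWith K f (Ici a)) : LipschitzWith K f := by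
  refine LipschitzWith.of_dist_le_mul fun s t => ?_
  wlog hst : s ≤ t generalizing s t
  · rw [dist_comm, dist_comm s]
    exact this t s (le_of_not_ge hst)
  rcases le_total t a with hta | hat
  · exact h₁.dist_le_mul s (hst.trans hta) t hta
  rcases le_total s a with hsa | has
  · calc dist (f s) (f t) ≤ dist (f s) (f a) + dist (f a) (f t) := dist_triangle _ _ _
      _ ≤ K * dist s a + K * dist a t :=
        add_le_add (h₁.dist_le_mul s hsa a self_mem_Iic) (h₂.dist_le_mul a self_mem_Ici t hat)
      _ = K * dist s t := by
        rw [Real.dist_eq, Real.dist_eq, Real.dist_eq, abs_of_nonpos (by linarith),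
          abs_of_nonpos (by linarith), abs_of_nonpos (by linarith)]
        ring
  · exact h₂.dist_le_mul s has t (has.trans hst)

theorem lipschitzWith_two_mul_sub (c : ℝ) : LipschitzWith 2 fun t : ℝ => 2 * t - c :=
  LipschitzWith.of_dist_le_mul fun s t => by
    rw [Real.dist_eq, Real.dist_eq, sub_sub_sub_cancel_right, ← mul_sub, abs_mul]
    norm_num

section LipschitzJoinedIn

variable {E : Type*} [PseudoMetricSpace E]

def LipschitzJoinedIn (D : Set E) (K : ℝ) (x y : E) : Prop :=
  ∃ ψ : ℝ → E, ∃ K' : ℝ≥0, LipschitzWith K' ψ ∧ (K' : ℝ) ≤ K ∧ ψ 0 = x ∧ ψ 1 = y ∧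
    MapsTo ψ (Icc 0 1) D

variable {D : Set E} {K K₁ K₂ : ℝ} {x y z : E}

theorem LipschitzJoinedIn.nonneg (h : LipschitzJoinedIn D K x y) : 0 ≤ K := by
  obtain ⟨-, K', -, hK', -⟩ := h
  exact K'.coe_nonneg.trans hK'

theorem LipschitzJoinedIn.mono_const (h : LipschitzJoinedIn D K₁ x y) (hK : K₁ ≤ K₂) :
    LipschitzJoinedIn D K₂ x y := by
  obtain ⟨ψ, K', hψ, hK', rest⟩ := h
  exact ⟨ψ, K', hψ, hK'.trans hK, rest⟩

theorem LipschitzJoinedIn.symm (h : LipschitzJoinedIn D K x y) : LipschitzJoinedIn D K y x := by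
  obtain ⟨ψ, K', hψ, hK', h₀, h₁, hD⟩ := h
  refine ⟨fun t => ψ (1 - t), K', ?_, hK', by simpa using h₁, by simpa using h₀, ?_⟩
  · have h := hψ.comp (IsometryEquiv.subLeft (1 : ℝ)).isometry.lipschitz
    rw [mul_one] at h
    exact h
  · intro t ht
    exact hD ⟨by linarith [ht.2], by linarith [ht.1]⟩

theorem LipschitzJoinedIn.trans (h₁ : LipschitzJoinedIn D K₁ x y)
    (h₂ : LipschitzJoinedIn D K₂ y z) : LipschitzJoinedIn D (2 * max K₁ K₂) x z := by
  obtain ⟨ψ₁, K₁', hψ₁, hK₁, h₁0, h₁1, hD₁⟩ := h₁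
  obtain ⟨ψ₂, K₂', hψ₂, hK₂, h₂0, h₂1, hD₂⟩ := h₂
  let ψ t := if t ≤ 1 / 2 then ψ₁ (2 * t) else ψ₂ (2 * t - 1)
  -- `2 * t - 0` so that both halves have the shape required by `piece` below
  have hleft : EqOn ψ (fun t => ψ₁ (2 * t - 0)) (Iic (1 / 2)) := fun t ht => by
    simp only [ψ, sub_zero]
    exact if_pos ht
  have hright : EqOn ψ (fun t => ψ₂ (2 * t - 1)) (Ici (1 / 2)) := fun t ht => by
    rcases (show 1 / 2 ≤ t from ht).eq_or_lt with rfl | ht'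
    · norm_num [ψ, h₁1, h₂0]
    · exact if_neg (not_le.2 ht')
  have hψ : LipschitzWith (max K₁' K₂' * 2) ψ := by
    have piece {g : ℝ → E} {K : ℝ≥0} {c : ℝ} {s : Set ℝ} (hg : LipschitzWith K g)
        (hK : K ≤ max K₁' K₂') (heq : EqOn ψ (fun t => g (2 * t - c)) s) :
        LipschitzOnWith (max K₁' K₂' * 2) ψ s := fun s hs t ht => by
      rw [heq hs, heq ht]
      exact ((hg.weaken hK).comp (lipschitzWith_two_mul_sub c)) s t
    exact LipschitzOnWith.lipschitzWith_of_Iic_of_Ici (piece hψ₁ (le_max_left _ _) hleft)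
      (piece hψ₂ (le_max_right _ _) hright)
  refine ⟨ψ, _, hψ, ?_, by simpa [ψ] using h₁0, by norm_num [ψ, h₂1], fun t ht => ?_⟩
  · push_cast
    rw [mul_comm]
    gcongr
  · rcases le_total t (1 / 2) with h | h
    · rw [hleft h]
      exact hD₁ ⟨by linarith [ht.1], by linarith⟩
    · rw [hright h]
      exact hD₂ ⟨by linarith, by linarith [ht.2]⟩

theorem lipschitzJoinedIn_of_chart {F : Type*} [NormedAddCommGroup F] [NormedSpace ℝ F]
    {Q : Set F} {S : Set E} {φ : F → E} {φinv : E → F} {kp km : ℝ≥0} (hQ : Convex ℝ Q)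
    (hφ : LipschitzOnWith kp φ Q) (hφD : MapsTo φ Q D) (hφinv : LipschitzOnWith km φinv S)
    (hinv : ∀ y ∈ S, φ (φinv y) = y ∧ φinv y ∈ Q) (hy : y ∈ S) (hz : z ∈ S) :
    LipschitzJoinedIn D (kp * km * dist y z) y z := by
  obtain ⟨hφy, hyQ⟩ := hinv y hy
  obtain ⟨hφz, hzQ⟩ := hinv z hz
  let c := AffineMap.lineMap (φinv y) (φinv z) ∘ Subtype.val ∘ projIcc (0 : ℝ) 1 zero_le_one
  have hcQ (t : ℝ) : c t ∈ Q := hQ.lineMap_mem hyQ hzQ (projIcc 0 1 zero_le_one t).2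
  have hc : LipschitzWith (nndist (φinv y) (φinv z) * (1 * 1)) c :=
    (lipschitzWith_lineMap (φinv y) (φinv z)).comp
      ((LipschitzWith.subtype_val _).comp (LipschitzWith.projIcc zero_le_one))
  rw [mul_one, mul_one] at hc
  refine ⟨φ ∘ c, kp * nndist (φinv y) (φinv z), ?_, ?_, by simp [c, hφy], by simp [c, hφz],
    fun t _ => hφD (hcQ t)⟩
  · rw [← lipschitzOnWith_univ]
    exact hφ.comp hc.lipschitzOnWith fun t _ => hcQ t
  · rw [mul_assoc]
    push_cast
    gcongr
    exact hφinv.dist_le_mul y hy z hz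

end LipschitzJoinedIn

section Compactness

variable {E : Type*} [MetricSpace E] {D : Set E}

def LipschitzJoinedNear (D : Set E) (p : E) : Prop :=
  ∃ W ∈ 𝓝 p, ∃ K : ℝ≥0, ∀ y ∈ D ∩ W, ∀ z ∈ D ∩ W, LipschitzJoinedIn D (K * dist y z) y z

theorem IsPreconnected.exists_lipschitzJoinedIn (hD : IsPreconnected D)
    (hloc : ∀ p ∈ D, LipschitzJoinedNear D p) {x y : E} (hx : x ∈ D) (hy : y ∈ D) :
    ∃ K, LipschitzJoinedIn D K x y := by
  refine hD.induction₂' (fun x y => ∃ K, LipschitzJoinedIn D K x y) (fun x hx => ?_)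
    (fun x y z _ _ _ ⟨K₁, h₁⟩ ⟨K₂, h₂⟩ => ⟨_, h₁.trans h₂⟩) hx hy
  obtain ⟨W, hW, K, hK⟩ := hloc x hx
  filter_upwards [inter_mem_nhdsWithin D hW] with y hy
  have hxW : x ∈ D ∩ W := ⟨hx, mem_of_mem_nhds hW⟩
  exact ⟨⟨_, hK x hxW y hy⟩, ⟨_, hK y hy x hxW⟩⟩

theorem IsPreconnected.exists_forall_lipschitzJoinedIn (hD : IsPreconnected D)
    (hc : IsCompact (closure D)) (hloc : ∀ p ∈ closure D, LipschitzJoinedNear D p) :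
    ∃ C, ∀ x ∈ D, ∀ y ∈ D, LipschitzJoinedIn D C x y := by
  rcases D.eq_empty_or_nonempty with rfl | ⟨x₀, hx₀⟩
  · exact ⟨0, by simp⟩
  suffices ∃ C, ∀ y ∈ D, y ∈ closure D → LipschitzJoinedIn D C x₀ y by
    obtain ⟨C, hC⟩ := this
    exact ⟨2 * max C C, fun x hx y hy =>
      (hC x hx (subset_closure hx)).symm.trans (hC y hy (subset_closure hy))⟩
  refine hc.induction_on (p := fun S => ∃ C, ∀ y ∈ D, y ∈ S → LipschitzJoinedIn D C x₀ y)
    ⟨0, by simp⟩ (fun S T hST ⟨C, hC⟩ => ⟨C, fun y hy hyS => hC y hy (hST hyS)⟩)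
    (fun S T ⟨C₁, h₁⟩ ⟨C₂, h₂⟩ => ⟨max C₁ C₂, fun y hy hyST => ?_⟩) fun p hp => ?_
  · rcases hyST with hyS | hyT
    · exact (h₁ y hy hyS).mono_const (le_max_left _ _)
    · exact (h₂ y hy hyT).mono_const (le_max_right _ _)
  obtain ⟨W, hW, K, hK⟩ := hloc p hp
  have hW' : W ∩ Metric.ball p 1 ∈ 𝓝 p := inter_mem hW (Metric.ball_mem_nhds p one_pos)
  obtain ⟨q, ⟨hqW, hqp⟩, hqD⟩ := mem_closure_iff_nhds.1 hp _ hW'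
  obtain ⟨C, hC⟩ := hD.exists_lipschitzJoinedIn (fun p hp => hloc p (subset_closure hp)) hx₀ hqD
  refine ⟨_, mem_nhdsWithin_of_mem_nhds hW', 2 * max C (K * 2), fun y hy ⟨hyW, hyp⟩ => ?_⟩
  refine (hC.trans (hK q ⟨hqD, hqW⟩ y ⟨hy, hyW⟩)).mono_const ?_
  have : dist q y < 2 := by
    rw [Metric.mem_ball] at hqp hyp
    linarith [dist_triangle_right q y p]
  gcongr

theorem exists_lipschitzJoinedIn_mul_dist_of_forall_lipschitzJoinedIn
    (hc : IsCompact (closure D)) (hloc : ∀ p ∈ closure D, LipschitzJoinedNear D p) {C : ℝ}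
    (hC : ∀ x ∈ D, ∀ y ∈ D, LipschitzJoinedIn D C x y) :
    ∃ κ, ∀ x ∈ D, ∀ y ∈ D, LipschitzJoinedIn D (κ * dist x y) x y := by
  suffices ∃ κ, ∀ x ∈ D, ∀ y ∈ D, (x, y) ∈ closure D ×ˢ closure D →
      LipschitzJoinedIn D (κ * dist x y) x y by
    obtain ⟨κ, hκ⟩ := this
    exact ⟨κ, fun x hx y hy => hκ x hx y hy ⟨subset_closure hx, subset_closure hy⟩⟩
  refine (hc.prod hc).induction_on
    (p := fun S => ∃ κ, ∀ x ∈ D, ∀ y ∈ D, (x, y) ∈ S → LipschitzJoinedIn D (κ * dist x y) x y)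
    ⟨0, by simp⟩ (fun S T hST ⟨κ, hκ⟩ => ⟨κ, fun x hx y hy hxy => hκ x hx y hy (hST hxy)⟩)
    (fun S T ⟨κ₁, h₁⟩ ⟨κ₂, h₂⟩ => ⟨max κ₁ κ₂, fun x hx y hy hxy => ?_⟩) ?_
  · rcases hxy with hS | hT
    · exact (h₁ x hx y hy hS).mono_const (by gcongr; exact le_max_left _ _)
    · exact (h₂ x hx y hy hT).mono_const (by gcongr; exact le_max_right _ _)
  rintro ⟨p, q⟩ ⟨hp, -⟩
  rcases eq_or_ne p q with rfl | hpq
  · obtain ⟨W, hW, K, hK⟩ := hloc p hp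
    exact ⟨W ×ˢ W, mem_nhdsWithin_of_mem_nhds (prod_mem_nhds hW hW), K,
      fun x hx y hy ⟨hxW, hyW⟩ => hK x ⟨hx, hxW⟩ y ⟨hy, hyW⟩⟩
  -- away from the diagonal the distance is bounded below, so the uniform bound `C` suffices
  set r := dist p q / 2
  have hr : 0 < r := half_pos (dist_pos.2 hpq)
  have hN : {z : E × E | r < dist z.1 z.2} ∈ 𝓝 (p, q) :=
    (isOpen_lt continuous_const continuous_dist).mem_nhds (half_lt_self (dist_pos.2 hpq))
  refine ⟨_, mem_nhdsWithin_of_mem_nhds hN, C / r, fun x hx y hy hxy => ?_⟩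
  refine (hC x hx y hy).mono_const ?_
  have hC0 : 0 ≤ C := (hC x hx y hy).nonneg
  calc C = C / r * r := (div_mul_cancel₀ C hr.ne').symm
    _ ≤ C / r * dist x y := by gcongr; exact hxy.le

end Compactness

section EuclideanSpace

variable {n : ℕ} {D : Set (EuclideanSpace ℝ (Fin n))}

theorem pathLen_nonneg (ψ : ℝ → EuclideanSpace ℝ (Fin n)) : 0 ≤ pathLen ψ :=
  integral_nonneg zero_le_one fun _ _ => norm_nonneg _

theorem LipschitzWith.pathLen_le {ψ : ℝ → EuclideanSpace ℝ (Fin n)} {K : ℝ≥0}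
    (h : LipschitzWith K ψ) : pathLen ψ ≤ K := by
  have := norm_integral_le_of_norm_le_const (a := 0) (b := 1) (f := fun t => ‖deriv ψ t‖)
    fun t _ => (norm_norm _).trans_le (norm_deriv_le_of_lipschitz h)
  rw [sub_zero, abs_one, mul_one] at this
  exact (le_abs_self _).trans this

theorem LipschitzJoinedIn.geodDist_le {x y : EuclideanSpace ℝ (Fin n)} {K : ℝ}
    (h : LipschitzJoinedIn D K x y) : geodDist D x y ≤ K := by
  obtain ⟨ψ, K', hψ, hK', h₀, h₁, hD⟩ := h
  refine (csInf_le ?_ ?_).trans (hψ.pathLen_le.trans hK')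
  · exact ⟨0, by rintro _ ⟨ψ', -, -, -, -, rfl⟩; exact pathLen_nonneg ψ'⟩
  · exact ⟨ψ, ⟨K', hψ⟩, h₀, h₁, hD, rfl⟩

theorem IsLipschitzDomain.lipschitzJoinedNear (hD : IsLipschitzDomain D) {p}
    (hp : p ∈ closure D) : LipschitzJoinedNear D p := by
  obtain ⟨hopen, -, -, hfront⟩ := hD
  by_cases hpD : p ∈ D
  · obtain ⟨ε, hε, hball⟩ := Metric.isOpen_iff.1 hopen p hpD
    exact ⟨_, Metric.ball_mem_nhds p hε, 1 * 1, fun y hy z hz => by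
      simpa using lipschitzJoinedIn_of_chart (convex_ball p ε) LipschitzWith.id.lipschitzOnWith
        hball LipschitzWith.id.lipschitzOnWith (fun y hy => ⟨rfl, hy.2⟩) hy hz⟩
  obtain ⟨U, Q, φ, φinv, kp, km, hU, hpU, hQ, hφ, hφinv, hbij, hinv⟩ :=
    hfront p (hopen.frontier_eq ▸ ⟨hp, hpD⟩)
  exact ⟨U, hU.mem_nhds hpU, kp * km, fun y hy z hz => by
    simpa using lipschitzJoinedIn_of_chart hQ hφ (hbij.mapsTo.mono_right inter_subset_left)
      hφinv hinv hy hz⟩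

end EuclideanSpace

theorem geodDist_le_const_mul_dist {n : ℕ} (D : Set (EuclideanSpace ℝ (Fin n)))
    (hD : IsLipschitzDomain D) :
    ∃ κ : ℝ, 0 < κ ∧ ∀ x ∈ D, ∀ y ∈ D, geodDist D x y ≤ κ * ‖x - y‖ := by
  have hc : IsCompact (closure D) := hD.2.2.1.isCompact_closure
  have hloc : ∀ p ∈ closure D, LipschitzJoinedNear D p := fun p hp => hD.lipschitzJoinedNear hp
  obtain ⟨C, hC⟩ := hD.2.1.isPreconnected.exists_forall_lipschitzJoinedIn hc hloc
  obtain ⟨κ, hκ⟩ := exists_lipschitzJoinedIn_mul_dist_of_forall_lipschitzJoinedIn hc hloc hC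
  refine ⟨max κ 1, by positivity, fun x hx y hy => ?_⟩
  rw [← dist_eq_norm]
  exact ((hκ x hx y hy).mono_const (by gcongr; exact le_max_left _ _)).geodDist_le
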